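/- If U is a nonprincipal additively idempotent ultrafilter on ℕ, then every set in the ultrafilter 2U ⊕ U contains a 3-term arithmetic progression with nonzero common difference, where 2U is the pushforward of U under n ↦ 2n. -/
import Mathlib


/-- The sum of ultrafilters on ℕ: `A ∈ usum U V ↔ {n | {m | n + m ∈ A} ∈ V} ∈ U`. -/
def usum (U V : Ultrafilter ℕ) : Ultrafilter ℕ :=
  U.bind fun n => V.map fun m => n + m

lemma mem_usum {U V : Ultrafilter ℕ} {A : Set ℕ} :
    A ∈ usum U V ↔ {n | {m | n + m ∈ A} ∈ V} ∈ U := by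
  change A ∈ (Filter.bind ↑U fun n => Filter.map (fun m => n + m) ↑V) ↔ _
  rw [Filter.mem_bind]
  constructor
  · rintro ⟨t, ht, h⟩
    exact U.toFilter.mem_of_superset ht h
  · intro h
    exact ⟨_, h, fun x hx => hx⟩

/-- For a nonprincipal additively idempotent `U`, every set in `2U ⊕ U`
contains a 3-term arithmetic progression with nonzero common difference. -/
theorem stmt16 (U : Ultrafilter ℕ) (hnp : ∀ n : ℕ, U ≠ pure n)
    (hid : usum U U = U) :
    ∀ A ∈ usum (Ultrafilter.map (fun n => 2 * n) U) U,
      ∃ a d : ℕ, 0 < d ∧ a ∈ A ∧ a + d ∈ A ∧ a + 2 * d ∈ A := by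
  intro A hA
  -- positivity set
  have hpos : {p : ℕ | 0 < p} ∈ U := by
    by_contra h
    have h0 : {0} ∈ U := by
      have := (Ultrafilter.compl_mem_iff_notMem (s := {p : ℕ | 0 < p})).2 h
      convert this using 1
      ext p; simp [Nat.pos_iff_ne_zero]
    obtain ⟨x, hx, hfx⟩ := Ultrafilter.eq_pure_of_finite_mem (Set.finite_singleton 0) h0
    exact hnp x hfx
  -- C k = {q | 2k + q ∈ A}, B0 = {k | C k ∈ U}
  set C : ℕ → Set ℕ := fun k => {q | 2 * k + q ∈ A} with hC
  have hB0 : {k | C k ∈ U} ∈ U := by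
    have := mem_usum.1 hA
    simpa [Ultrafilter.mem_map, Set.preimage] using this
  -- idempotence gives membership statements
  have hstep : ∀ S ∈ U, {n : ℕ | {m : ℕ | n + m ∈ S} ∈ U} ∈ U := by
    intro S hS
    have h2 : S ∈ usum U U := by rw [hid]; exact hS
    exact mem_usum.1 h2
  have hB1 : {n | {p | n + p ∈ {k | C k ∈ U}} ∈ U} ∈ U := hstep _ hB0
  obtain ⟨n, hn0, hn1⟩ := (Filter.nonempty_of_mem (Filter.inter_mem hB0 hB1))
  have hCn : C n ∈ U := hn0
  have hDn : {p | C (n + p) ∈ U} ∈ U := hn1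
  have hE : {p | {q | p + q ∈ C n} ∈ U} ∈ U := hstep _ hCn
  obtain ⟨p, hp⟩ := Filter.nonempty_of_mem (Filter.inter_mem hpos (Filter.inter_mem hDn hE))
  obtain ⟨hppos, hpD, hpE⟩ := hp
  obtain ⟨q, hq⟩ := Filter.nonempty_of_mem (Filter.inter_mem hCn (Filter.inter_mem hpD hpE))
  obtain ⟨hq1, hq2, hq3⟩ := hq
  refine ⟨2 * n + q, p, hppos, hq1, ?_, ?_⟩
  · have : 2 * n + (p + q) ∈ A := hq3
    convert this using 1; ring
  · have : 2 * (n + p) + q ∈ A := hq2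
    convert this using 1; ring
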